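/- There exists δ ∈ (0,1) such that the following holds. Let α > 1, β = 4/(α+3), γ = 2(α−1)/(α+3), α₁ = β + γ = (2α+2)/(α+3), and let k be a positive integer with 2⌈2^{βk}⌉ ≤ 2^k and 2^{(α₁−1)k−2} ≥ 2. Set W₀ = {x ∈ ℍ : x₂ − ⌈2^{βk}⌉ ≥ |x₁| · 2^{−γk}}. Then the simple random walk started at (0, 2^k) satisfies P_{(0,2^k)}(τ̄_{L_{2^{k+1}}} ≤ τ̄_{ℤ² \ W₀}) ≥ 1/2 − 2^{(β−1)k+1} − (1−δ)^{2^{(α₁−1)k−2}}. -/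

import Mathlib

open Filter

namespace SHM

/-- The upper half planar lattice `ℍ = {(x₁,x₂) ∈ ℤ² : x₂ ≥ 0}` (including the x-axis). -/
def upperH : Set (ℤ × ℤ) := {p | 0 ≤ p.2}

/-- The horizontal line `L_n = {(x,n) : x ∈ ℤ}` of height `n`. -/
def lineH (n : ℤ) : Set (ℤ × ℤ) := {p | p.2 = n}

/-- The four unit steps of the planar simple random walk. -/
def dirs : Finset (ℤ × ℤ) := {(1,0), (-1,0), (0,1), (0,-1)}

/-- The position after `m` steps of the walk started at `z` whose first `n`
increments are given by `σ`. -/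
def pos (z : ℤ × ℤ) {n : ℕ} (σ : Fin n → ℤ × ℤ) (m : ℕ) : ℤ × ℤ :=
  z + ∑ i ∈ Finset.univ.filter (fun i : Fin n => (i : ℕ) < m), σ i

/-- The probability that the first `n` increments of the simple random walk
(each uniform on the four unit vectors) satisfy the predicate `E`. -/
noncomputable def stepProb (n : ℕ) (E : (Fin n → ℤ × ℤ) → Prop) : ℝ :=
  (Nat.card {σ : Fin n → ↥dirs // E fun i => ((σ i : ℤ × ℤ))} : ℝ) / 4 ^ n

/-- `P_z(S_{τ̄_A} = x)` : the walk started at `z` hits `A` (in finite time) for the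
first time precisely at the point `x`.  Here `τ̄_A = min {m ≥ 0 : S_m ∈ A}`. -/
noncomputable def hitProb (z : ℤ × ℤ) (A : Set (ℤ × ℤ)) (x : ℤ × ℤ) : ℝ :=
  ∑' n : ℕ, stepProb n fun σ =>
    pos z σ n = x ∧ x ∈ A ∧ ∀ m < n, pos z σ m ∉ A

/-- `P_z(τ̄_A < τ̄_B)` : the walk started at `z` hits `A` strictly before hitting `B`. -/
noncomputable def hitBeforeProb (z : ℤ × ℤ) (A B : Set (ℤ × ℤ)) : ℝ :=
  ∑' n : ℕ, stepProb n fun σ =>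
    pos z σ n ∈ A ∧ pos z σ n ∉ B ∧ ∀ m < n, pos z σ m ∉ A ∧ pos z σ m ∉ B

/-- The stationary harmonic measure `H_{B,N}(x) = Σ_{z ∈ L_N \ B} P_z(S_{τ̄_{B ∪ L₀}} = x)`. -/
noncomputable def harm (B : Set (ℤ × ℤ)) (N : ℕ) (x : ℤ × ℤ) : ℝ :=
  ∑' z : ↥(lineH (N : ℤ) \ B), hitProb (z : ℤ × ℤ) (B ∪ lineH 0) x

/-- `P_z(τ̄_A ≤ τ̄_B)` : the walk started at `z` hits `A` (in finite time) no later than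
it hits `B`. -/
noncomputable def hitLeProb (z : ℤ × ℤ) (A B : Set (ℤ × ℤ)) : ℝ :=
  ∑' n : ℕ, stepProb n fun σ =>
    pos z σ n ∈ A ∧ ∀ m < n, pos z σ m ∉ A ∧ pos z σ m ∉ B

/-- The linear wedge `W₀ = {x ∈ ℍ : x₂ − ⌈2^{βk}⌉ ≥ |x₁|·2^{−γk}}`. -/
def wedgeW₀ (β γ : ℝ) (k : ℕ) : Set (ℤ × ℤ) :=
  {x ∈ upperH | |(x.1 : ℝ)| * (2 : ℝ) ^ (-(γ * k)) ≤ (x.2 : ℝ) - (⌈(2 : ℝ) ^ (β * k)⌉ : ℝ)}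

/-!
Consider the wedge `{(x, y) : y ≥ 0, y - c ≥ m |x|}`, the start `(0, n)` and the target line `L_{2n}`.
Put `a = 1 / (4n)` and choose `ω ≥ 0` with `cosh a + cos ω = 2`; then
`u(x, y) = (y - c) / (2n - c) - 8m cosh (a x) cos (ω (y - c))`
is discrete harmonic. As `ω ≤ 2a = 1 / (2n)`, the cosine is at least `1/2` on the strip
`c - 1 ≤ y ≤ 2n`. Hence `u ≤ 1` on `L_{2n}`, and `u ≤ 0` at every point where the walk can leave
the wedge, since there `cosh (a x) ≥ a |x| ≥ a (y - c) / m`. So the escape probability is at least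
`u(0, n) ≥ (n - c) / (2n - c) - 8m`.

Optional stopping for the unbounded `u` is replaced by induction on the time horizon. In the
strip, `u ≤ g := 2 cos (ω (y - c))`, and the mean of `g` over the four neighbours is `ρ g` with
`ρ = (1 + cos ω) / 2 < 1`. So the walks still alive at time `N` contribute at most `ρ ^ N g(0, n)`.

With `n = 2^k`, `c = ⌈2^{βk}⌉`, `m = 2^{-γk} = 2^{-2t}` and `t = (α₁ - 1) k ≥ 3`, the bound is at
least `1/2 - 2^{1-t} = 1/2 - 2^{(β-1)k+1}`. Hence every `δ` works.
-/

open Finset Topology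

lemma pos_zero (z : ℤ × ℤ) {n : ℕ} (σ : Fin n → ℤ × ℤ) : pos z σ 0 = z := by
  simp [pos]

lemma pos_cons_succ (z d : ℤ × ℤ) {n : ℕ} (σ : Fin n → ℤ × ℤ) (m : ℕ) :
    pos z (Fin.cons d σ : Fin (n + 1) → ℤ × ℤ) (m + 1) = pos (z + d) σ m := by
  simp [pos, sum_filter, Fin.sum_univ_succ, add_assoc]

lemma stepProb_nonneg (n : ℕ) (E : (Fin n → ℤ × ℤ) → Prop) : 0 ≤ stepProb n E := by
  unfold stepProb; positivity

lemma stepProb_false (n : ℕ) : stepProb n (fun _ => False) = 0 := by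
  simp [stepProb]

lemma stepProb_zero (E : (Fin 0 → ℤ × ℤ) → Prop) [Decidable (E Fin.elim0)] :
    stepProb 0 E = if E Fin.elim0 then 1 else 0 := by
  have hσ : ∀ σ : Fin 0 → ℤ × ℤ, σ = Fin.elim0 := fun σ => funext fun i => i.elim0
  by_cases h : E Fin.elim0 <;> simp [stepProb, hσ, h]

lemma stepProb_succ (n : ℕ) (E : (Fin (n + 1) → ℤ × ℤ) → Prop) :
    stepProb (n + 1) E = (∑ d ∈ dirs, stepProb n fun σ => E (Fin.cons d σ)) / 4 := by
  let F : ↥dirs → (Fin n → ↥dirs) → Prop := fun d τ =>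
    E (Fin.cons (d : ℤ × ℤ) fun i => (τ i : ℤ × ℤ))
  have hcard : Nat.card {σ : Fin (n + 1) → ↥dirs // E fun i => (σ i : ℤ × ℤ)}
      = ∑ d : ↥dirs, Nat.card {τ // F d τ} := by
    rw [← Nat.card_sigma]
    refine Nat.card_congr (((Fin.consEquiv fun _ => ↥dirs).symm.subtypeEquiv fun σ => ?_).trans
      (Equiv.subtypeProdEquivSigmaSubtype F))
    conv_lhs => rw [← (Fin.consEquiv fun _ => ↥dirs).apply_symm_apply σ]
    exact Iff.of_eq (congrArg E (Fin.comp_cons Subtype.val _ _))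
  simp only [stepProb, hcard, Nat.cast_sum, ← sum_div, div_div, pow_succ]
  rw [← sum_coe_sort dirs]

lemma card_dirs : dirs.card = 4 := rfl

lemma sum_dirs (f : ℤ × ℤ → ℝ) (p : ℤ × ℤ) :
    ∑ d ∈ dirs, f (p + d) =
      f (p.1 + 1, p.2) + f (p.1 - 1, p.2) + f (p.1, p.2 + 1) + f (p.1, p.2 - 1) := by
  obtain ⟨x, y⟩ := p
  simp [dirs, Prod.mk_add_mk, sub_eq_add_neg, add_assoc]

lemma snd_mem_Icc_of_mem_dirs {d : ℤ × ℤ} (hd : d ∈ dirs) : -1 ≤ d.2 ∧ d.2 ≤ 1 := by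
  simp only [dirs, mem_insert, mem_singleton] at hd
  rcases hd with rfl | rfl | rfl | rfl <;> simp

section HittingTimes

variable (z : ℤ × ℤ) (A B : Set (ℤ × ℤ))

def hitLeEvent (n : ℕ) (σ : Fin n → ℤ × ℤ) : Prop :=
  pos z σ n ∈ A ∧ ∀ m < n, pos z σ m ∉ A ∧ pos z σ m ∉ B

lemma hitLeProb_eq_tsum : hitLeProb z A B = ∑' n, stepProb n (hitLeEvent z A B n) := rfl

/-- `P_z(τ̄_A ≤ τ̄_B, τ̄_A < N)`. -/
noncomputable def hitLeProbWithin (N : ℕ) : ℝ :=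
  ∑ n ∈ range N, stepProb n (hitLeEvent z A B n)

lemma hitLeEvent_cons (d : ℤ × ℤ) {n : ℕ} (σ : Fin n → ℤ × ℤ) :
    hitLeEvent z A B (n + 1) (Fin.cons d σ) ↔ (z ∉ A ∧ z ∉ B) ∧ hitLeEvent (z + d) A B n σ := by
  simp only [hitLeEvent, Nat.forall_lt_succ_left, pos_zero, pos_cons_succ]
  tauto

open Classical in
lemma stepProb_hitLeEvent_zero : stepProb 0 (hitLeEvent z A B 0) = if z ∈ A then 1 else 0 := by
  simp [stepProb_zero, hitLeEvent, pos_zero]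

open Classical in
lemma stepProb_hitLeEvent_succ (n : ℕ) :
    stepProb (n + 1) (hitLeEvent z A B (n + 1)) =
      if z ∉ A ∧ z ∉ B then (∑ d ∈ dirs, stepProb n (hitLeEvent (z + d) A B n)) / 4 else 0 := by
  simp only [stepProb_succ, hitLeEvent_cons]
  split_ifs with h <;> simp [h, stepProb_false]

open Classical in
lemma hitLeProbWithin_succ (N : ℕ) :
    hitLeProbWithin z A B (N + 1) =
      if z ∈ A then 1 else if z ∈ B then 0
      else (∑ d ∈ dirs, hitLeProbWithin (z + d) A B N) / 4 := by
  simp only [hitLeProbWithin, sum_range_succ', stepProb_hitLeEvent_succ, stepProb_hitLeEvent_zero]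
  by_cases hA : z ∈ A
  · simp [hA]
  by_cases hB : z ∈ B
  · simp [hA, hB]
  · simp [hA, hB, sum_div, sum_comm (s := range N)]

lemma hitLeProbWithin_nonneg (N : ℕ) : 0 ≤ hitLeProbWithin z A B N :=
  sum_nonneg fun n _ => stepProb_nonneg n _

lemma hitLeProbWithin_le_one (N : ℕ) : hitLeProbWithin z A B N ≤ 1 := by
  induction N generalizing z with
  | zero => simp [hitLeProbWithin]
  | succ N ih =>
    rw [hitLeProbWithin_succ]
    split_ifs
    · rfl
    · exact zero_le_one
    · calc (∑ d ∈ dirs, hitLeProbWithin (z + d) A B N) / 4 ≤ (∑ _d ∈ dirs, (1 : ℝ)) / 4 := by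
            gcongr with d; exact ih _
        _ = 1 := by simp [card_dirs]

end HittingTimes

section MaximumPrinciple

variable {A B G : Set (ℤ × ℤ)} {u g : ℤ × ℤ → ℝ} {ρ : ℝ}

lemma le_hitLeProbWithin_add_pow_mul (hρ : 0 ≤ ρ) (hGA : ∀ p ∈ G, p ∉ A) (hGB : ∀ p ∈ G, p ∉ B)
    (hbdry : ∀ p ∈ G, ∀ d ∈ dirs,
      p + d ∈ G ∨ (p + d ∈ A ∧ u (p + d) ≤ 1) ∨ (p + d ∈ B ∧ u (p + d) ≤ 0))
    (hu : ∀ p ∈ G, 4 * u p ≤ ∑ d ∈ dirs, u (p + d))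
    (hg : ∀ p ∈ G, ∑ d ∈ dirs, g (p + d) ≤ 4 * ρ * g p)
    (hg_nonneg : ∀ p ∈ G, ∀ d ∈ dirs, 0 ≤ g (p + d))
    (hug : ∀ p ∈ G, u p ≤ g p) (N : ℕ) :
    ∀ p ∈ G, u p ≤ hitLeProbWithin p A B (N + 1) + ρ ^ N * g p := by
  induction N with
  | zero =>
    intro p hp
    simpa [hitLeProbWithin, stepProb_hitLeEvent_zero, hGA p hp] using hug p hp
  | succ N ih =>
    intro p hp
    have hnbr : ∀ d ∈ dirs,
        u (p + d) ≤ hitLeProbWithin (p + d) A B (N + 1) + ρ ^ N * g (p + d) := by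
      intro d hd
      have hρg : 0 ≤ ρ ^ N * g (p + d) := mul_nonneg (pow_nonneg hρ N) (hg_nonneg p hp d hd)
      rcases hbdry p hp d hd with hG | ⟨hA, hu1⟩ | ⟨-, hu0⟩
      · exact ih _ hG
      · rw [hitLeProbWithin_succ, if_pos hA]; linarith
      · linarith [hitLeProbWithin_nonneg (p + d) A B (N + 1)]
    have hsum := sum_le_sum hnbr
    rw [sum_add_distrib, ← mul_sum] at hsum
    rw [hitLeProbWithin_succ, if_neg (hGA p hp), if_neg (hGB p hp)]
    have hdecay := mul_le_mul_of_nonneg_left (hg p hp) (pow_nonneg hρ N)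
    have e : ρ ^ N * (4 * ρ * g p) = 4 * (ρ ^ (N + 1) * g p) := by ring
    linarith [hu p hp]

theorem le_hitLeProb (hρ₀ : 0 ≤ ρ) (hρ₁ : ρ < 1) (hGA : ∀ p ∈ G, p ∉ A) (hGB : ∀ p ∈ G, p ∉ B)
    (hbdry : ∀ p ∈ G, ∀ d ∈ dirs,
      p + d ∈ G ∨ (p + d ∈ A ∧ u (p + d) ≤ 1) ∨ (p + d ∈ B ∧ u (p + d) ≤ 0))
    (hu : ∀ p ∈ G, 4 * u p ≤ ∑ d ∈ dirs, u (p + d))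
    (hg : ∀ p ∈ G, ∑ d ∈ dirs, g (p + d) ≤ 4 * ρ * g p)
    (hg_nonneg : ∀ p ∈ G, ∀ d ∈ dirs, 0 ≤ g (p + d))
    (hug : ∀ p ∈ G, u p ≤ g p) {z : ℤ × ℤ} (hz : z ∈ G) :
    u z ≤ hitLeProb z A B := by
  have hsummable : Summable fun n => stepProb n (hitLeEvent z A B n) :=
    summable_of_sum_range_le (fun n => stepProb_nonneg n _) (hitLeProbWithin_le_one z A B)
  have hbound : ∀ N : ℕ, u z ≤ hitLeProb z A B + ρ ^ N * g z := fun N =>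
    (le_hitLeProbWithin_add_pow_mul hρ₀ hGA hGB hbdry hu hg hg_nonneg hug N z hz).trans
      (by
        gcongr
        rw [hitLeProb_eq_tsum]
        exact hsummable.sum_le_tsum _ fun n _ => stepProb_nonneg n _)
  have hlim : Tendsto (fun N : ℕ => hitLeProb z A B + ρ ^ N * g z) atTop
      (𝓝 (hitLeProb z A B)) := by
    simpa using tendsto_const_nhds.add
      ((tendsto_pow_atTop_nhds_zero_of_lt_one hρ₀ hρ₁).mul_const (g z))
  exact ge_of_tendsto' hlim hbound

end MaximumPrinciple

section Trigonometry

open Real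

lemma cosh_le_one_add_sq_div_two_add {a : ℝ} (ha : |a| ≤ 1) :
    cosh a ≤ 1 + a ^ 2 / 2 + a ^ 4 / 4 := by
  have hsq : |a ^ 2 / 2| ≤ 1 := by
    rw [abs_of_nonneg (by positivity)]
    nlinarith [sq_abs a, abs_nonneg a]
  have hexp := (abs_le.mp (abs_exp_sub_one_sub_id_le hsq)).2
  linarith [cosh_le_exp_half_sq a]

lemma cos_two_mul_add_cosh_le_two {a : ℝ} (h0 : 0 ≤ a) (h1 : a ≤ 1 / 2) :
    cos (2 * a) + cosh a ≤ 2 := by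
  have h2a : |2 * a| ≤ 1 := by rw [abs_of_nonneg (by positivity)]; linarith
  have hcos := (abs_le.mp (cos_bound h2a)).2
  rw [abs_of_nonneg (by positivity)] at hcos
  have hcosh := cosh_le_one_add_sq_div_two_add (show |a| ≤ 1 by rw [abs_of_nonneg h0]; linarith)
  nlinarith [pow_le_pow_left₀ h0 h1 2]

lemma cos_arccos_two_sub_cosh {a : ℝ} (ha : |a| ≤ 1) :
    cos (arccos (2 - cosh a)) = 2 - cosh a := by
  have hcosh := cosh_le_one_add_sq_div_two_add ha
  have ha2 : a ^ 2 ≤ 1 := by nlinarith [sq_abs a, abs_nonneg a]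
  refine cos_arccos ?_ (by linarith [one_le_cosh a])
  nlinarith

lemma arccos_two_sub_cosh_le {a : ℝ} (h0 : 0 ≤ a) (h1 : a ≤ 1 / 2) :
    arccos (2 - cosh a) ≤ 2 * a := by
  calc arccos (2 - cosh a) ≤ arccos (cos (2 * a)) :=
        arccos_le_arccos (by linarith [cos_two_mul_add_cosh_le_two h0 h1])
    _ = 2 * a := arccos_cos (by positivity) (by linarith [pi_gt_three])

lemma half_le_cos {x : ℝ} (hx : |x| ≤ 1) : 1 / 2 ≤ cos x := by
  nlinarith [one_sub_sq_div_two_le_cos (x := x), sq_abs x, abs_nonneg x]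

lemma abs_le_cosh (x : ℝ) : |x| ≤ cosh x := by
  rw [← cosh_abs]
  exact (self_le_sinh_iff.mpr (abs_nonneg x)).trans (sinh_lt_cosh _).le

end Trigonometry

section Harmonic

open Real

variable (p : ℤ × ℤ) (c : ℝ)

lemma sum_dirs_snd_sub : ∑ d ∈ dirs, (((p + d).2 : ℝ) - c) = 4 * ((p.2 : ℝ) - c) := by
  rw [sum_dirs (fun q => ((q.2 : ℝ) - c))]; push_cast; ring

lemma sum_dirs_cos (ω : ℝ) :
    ∑ d ∈ dirs, cos (ω * ((p + d).2 - c)) = 2 * (1 + cos ω) * cos (ω * (p.2 - c)) := by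
  rw [sum_dirs (fun q => cos (ω * ((q.2 : ℝ) - c)))]
  push_cast
  rw [show ω * (p.2 + 1 - c) = ω * (p.2 - c) + ω by ring,
    show ω * (p.2 - 1 - c) = ω * (p.2 - c) - ω by ring, cos_add, cos_sub]
  ring

lemma sum_dirs_cosh_mul_cos {a ω : ℝ} (h : cosh a + cos ω = 2) :
    ∑ d ∈ dirs, cosh (a * (p + d).1) * cos (ω * ((p + d).2 - c))
      = 4 * (cosh (a * p.1) * cos (ω * (p.2 - c))) := by
  rw [sum_dirs (fun q => cosh (a * q.1) * cos (ω * ((q.2 : ℝ) - c)))]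
  push_cast
  rw [show ω * (p.2 + 1 - c) = ω * (p.2 - c) + ω by ring,
    show ω * (p.2 - 1 - c) = ω * (p.2 - c) - ω by ring, cos_add, cos_sub,
    show a * (p.1 + 1) = a * p.1 + a by ring, show a * (p.1 - 1) = a * p.1 - a by ring,
    cosh_add, cosh_sub]
  linear_combination (2 * cosh (a * p.1) * cos (ω * (p.2 - c))) * h

end Harmonic

def wedge (m c : ℝ) : Set (ℤ × ℤ) := {p | 0 ≤ p.2 ∧ |(p.1 : ℝ)| * m ≤ p.2 - c}

lemma wedgeW₀_eq_wedge (β γ : ℝ) (k : ℕ) :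
    wedgeW₀ β γ k = wedge ((2 : ℝ) ^ (-(γ * k))) ⌈(2 : ℝ) ^ (β * k)⌉ := rfl

section WedgeTest

open Real

noncomputable def wedgeFreq (n : ℤ) : ℝ := arccos (2 - cosh (1 / (4 * n)))

noncomputable def wedgeTest (n : ℤ) (m c : ℝ) (p : ℤ × ℤ) : ℝ :=
  (p.2 - c) / (2 * n - c) - 8 * m * (cosh (1 / (4 * n) * p.1) * cos (wedgeFreq n * (p.2 - c)))

variable {n : ℤ} {m c : ℝ}

lemma inv_four_mul_le_half (hn : 1 ≤ n) : 1 / (4 * (n : ℝ)) ≤ 1 / 2 := by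
  have : (1 : ℝ) ≤ n := by exact_mod_cast hn
  rw [div_le_div_iff₀ (by positivity) (by norm_num)]; linarith

lemma wedgeFreq_nonneg : 0 ≤ wedgeFreq n := arccos_nonneg _

lemma cosh_add_cos_wedgeFreq (hn : 1 ≤ n) : cosh (1 / (4 * n)) + cos (wedgeFreq n) = 2 := by
  have h0 : (0 : ℝ) ≤ 1 / (4 * n) := by positivity
  rw [wedgeFreq, cos_arccos_two_sub_cosh (by rw [abs_of_nonneg h0]; linarith [inv_four_mul_le_half hn])]
  ring

lemma cos_wedgeFreq_lt_one (hn : 1 ≤ n) : cos (wedgeFreq n) < 1 := by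
  have : (0 : ℝ) < 1 / (4 * n) := by positivity
  linarith [cosh_add_cos_wedgeFreq hn, one_lt_cosh.mpr this.ne']

lemma half_le_cos_wedgeFreq_mul (hn : 1 ≤ n) {s : ℝ} (hs₁ : -1 ≤ s) (hs₂ : s ≤ 2 * n) :
    1 / 2 ≤ cos (wedgeFreq n * s) := by
  have hn' : (1 : ℝ) ≤ n := by exact_mod_cast hn
  have hω : wedgeFreq n ≤ 1 / (2 * n) := by
    calc wedgeFreq n ≤ 2 * (1 / (4 * n)) :=
          arccos_two_sub_cosh_le (by positivity) (inv_four_mul_le_half hn)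
      _ = 1 / (2 * n) := by ring
  have hs : |s| ≤ 2 * n := abs_le.mpr ⟨by linarith, hs₂⟩
  apply half_le_cos
  calc |wedgeFreq n * s| = wedgeFreq n * |s| := by rw [abs_mul, abs_of_nonneg wedgeFreq_nonneg]
    _ ≤ 1 / (2 * n) * (2 * n) := by gcongr
    _ = 1 := by field_simp

lemma sum_dirs_wedgeTest (hn : 1 ≤ n) (p : ℤ × ℤ) :
    ∑ d ∈ dirs, wedgeTest n m c (p + d) = 4 * wedgeTest n m c p := by
  simp only [wedgeTest]
  rw [sum_sub_distrib, ← sum_div, ← mul_sum, sum_dirs_snd_sub,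
    sum_dirs_cosh_mul_cos p c (cosh_add_cos_wedgeFreq hn)]
  ring

lemma wedgeTest_le_one_of_snd_eq (hn : 1 ≤ n) (hm : 0 ≤ m) (hc₀ : 0 ≤ c) (hcn : c ≤ n)
    {p : ℤ × ℤ} (hp : p.2 = 2 * n) : wedgeTest n m c p ≤ 1 := by
  have hn' : (1 : ℝ) ≤ n := by exact_mod_cast hn
  have hcos := half_le_cos_wedgeFreq_mul hn (s := 2 * n - c) (by linarith) (by linarith)
  have hnonneg : 0 ≤ 8 * m * (cosh (1 / (4 * n) * p.1) * cos (wedgeFreq n * (2 * n - c))) := by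
    have := cosh_pos (1 / (4 * n) * p.1)
    positivity
  rw [wedgeTest, show (p.2 : ℝ) = 2 * n by exact_mod_cast hp, div_self (by linarith)]
  linarith

lemma wedgeTest_nonpos (hn : 1 ≤ n) (hm : 0 < m) (hc₀ : 0 ≤ c) (hcn : c ≤ n)
    {p : ℤ × ℤ} (hp₁ : -1 ≤ p.2 - c) (hp₂ : (p.2 : ℝ) ≤ 2 * n)
    (hside : p.2 - c ≤ |(p.1 : ℝ)| * m) : wedgeTest n m c p ≤ 0 := by
  have hn' : (1 : ℝ) ≤ n := by exact_mod_cast hn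
  set s : ℝ := p.2 - c
  have hcos := half_le_cos_wedgeFreq_mul hn (s := s) hp₁ (by linarith)
  have hcosh := cosh_pos (1 / (4 * n) * p.1)
  rw [wedgeTest]
  rcases le_total s 0 with hs | hs
  · have : s / (2 * n - c) ≤ 0 := div_nonpos_of_nonpos_of_nonneg hs (by linarith)
    have : 0 ≤ 8 * m * (cosh (1 / (4 * n) * p.1) * cos (wedgeFreq n * s)) := by positivity
    linarith
  · have hcosh_ge : s / (4 * n * m) ≤ cosh (1 / (4 * n) * p.1) := by
      calc s / (4 * n * m) ≤ 1 / (4 * n) * |(p.1 : ℝ)| := by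
            rw [div_le_iff₀ (by positivity)]; field_simp; linarith
        _ = |1 / (4 * n) * (p.1 : ℝ)| := by
            rw [abs_mul, abs_of_nonneg (show (0 : ℝ) ≤ 1 / (4 * n) by positivity)]
        _ ≤ _ := abs_le_cosh _
    have : s / (2 * n - c) ≤ 8 * m * (cosh (1 / (4 * n) * p.1) * cos (wedgeFreq n * s)) :=
      calc s / (2 * n - c) ≤ s / n := div_le_div_of_nonneg_left hs (by positivity) (by linarith)
        _ = 8 * m * (s / (4 * n * m) * (1 / 2)) := by field_simp; ring
        _ ≤ 8 * m * (cosh (1 / (4 * n) * p.1) * cos (wedgeFreq n * s)) := by gcongr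
    linarith

lemma wedgeTest_le_two_mul_cos (hn : 1 ≤ n) (hm : 0 ≤ m) (hc₀ : 0 ≤ c) (hcn : c ≤ n)
    {p : ℤ × ℤ} (hp₁ : c ≤ p.2) (hp₂ : (p.2 : ℝ) ≤ 2 * n) :
    wedgeTest n m c p ≤ 2 * cos (wedgeFreq n * (p.2 - c)) := by
  have hn' : (1 : ℝ) ≤ n := by exact_mod_cast hn
  have hcos := half_le_cos_wedgeFreq_mul hn (s := p.2 - c) (by linarith) (by linarith)
  have hcosh := cosh_pos (1 / (4 * n) * p.1)
  have : 0 ≤ 8 * m * (cosh (1 / (4 * n) * p.1) * cos (wedgeFreq n * (p.2 - c))) := by positivity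
  have : (p.2 - c) / (2 * n - c) ≤ 1 := by rw [div_le_one (by linarith)]; linarith
  rw [wedgeTest]
  linarith

end WedgeTest

section WedgeEscape

open Real

variable {n : ℤ} {m c : ℝ}

lemma le_snd_of_mem_wedge (hm : 0 ≤ m) {p : ℤ × ℤ} (hp : p ∈ wedge m c) : c ≤ p.2 := by
  have : 0 ≤ |(p.1 : ℝ)| * m := by positivity
  linarith [hp.2]

lemma snd_add_mem_Icc (hm : 0 ≤ m) {p d : ℤ × ℤ} (hp : p ∈ wedge m c) (hp₂ : p.2 < 2 * n)
    (hd : d ∈ dirs) : c - 1 ≤ (p + d).2 ∧ (p + d).2 ≤ 2 * n := by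
  obtain ⟨hd₁, hd₂⟩ := snd_mem_Icc_of_mem_dirs hd
  have hq : (p + d).2 = p.2 + d.2 := rfl
  refine ⟨?_, by omega⟩
  have : ((p.2 - 1 : ℤ) : ℝ) ≤ (p + d).2 := by exact_mod_cast (by omega : p.2 - 1 ≤ (p + d).2)
  push_cast at this
  linarith [le_snd_of_mem_wedge hm hp]

lemma wedgeTest_step (hn : 1 ≤ n) (hm : 0 < m) (hc₀ : 0 ≤ c) (hcn : c ≤ n)
    {p d : ℤ × ℤ} (hp : p ∈ wedge m c) (hp₂ : p.2 < 2 * n) (hd : d ∈ dirs) :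
    (p + d ∈ wedge m c ∧ (p + d).2 < 2 * n) ∨
      (p + d ∈ lineH (2 * n) ∧ wedgeTest n m c (p + d) ≤ 1) ∨
      (p + d ∈ (wedge m c)ᶜ ∧ wedgeTest n m c (p + d) ≤ 0) := by
  obtain ⟨hq₁, hq₂⟩ := snd_add_mem_Icc hm.le hp hp₂ hd
  rcases hq₂.lt_or_eq with hlt | heq
  · by_cases hw : p + d ∈ wedge m c
    · exact Or.inl ⟨hw, hlt⟩
    refine Or.inr (Or.inr ⟨hw, wedgeTest_nonpos hn hm hc₀ hcn (by linarith)
      (by exact_mod_cast hlt.le) ?_⟩)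
    by_contra hside
    push Not at hside
    have := mul_nonneg (abs_nonneg ((p + d).1 : ℝ)) hm.le
    exact hw ⟨by exact_mod_cast (by linarith : (0 : ℝ) ≤ (p + d).2), hside.le⟩
  · exact Or.inr (Or.inl ⟨heq, wedgeTest_le_one_of_snd_eq hn hm.le hc₀ hcn heq⟩)

theorem sub_le_hitLeProb_wedge (hn : 1 ≤ n) (hm : 0 < m) (hc₀ : 0 ≤ c) (hcn : c ≤ n) :
    (n - c) / (2 * n - c) - 8 * m ≤ hitLeProb (0, n) (lineH (2 * n)) (wedge m c)ᶜ := by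
  have hn' : (1 : ℝ) ≤ n := by exact_mod_cast hn
  set ω := wedgeFreq n
  set G : Set (ℤ × ℤ) := {p | p ∈ wedge m c ∧ p.2 < 2 * n}
  have hstart : (n - c) / (2 * n - c) - 8 * m ≤ wedgeTest n m c (0, n) := by
    have := cos_le_one (ω * (n - c))
    simp only [wedgeTest, Int.cast_zero, mul_zero, cosh_zero, one_mul]
    nlinarith
  have hz : ((0 : ℤ), n) ∈ G :=
    ⟨⟨show (0 : ℤ) ≤ n by omega, by simpa using hcn⟩, show n < 2 * n by omega⟩
  have hg : ∀ p ∈ G, ∑ d ∈ dirs, 2 * cos (ω * ((p + d).2 - c))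
      ≤ 4 * ((1 + cos ω) / 2) * (2 * cos (ω * (p.2 - c))) := fun p _ => by
    rw [← mul_sum, sum_dirs_cos]
    linarith
  have hg_nonneg : ∀ p ∈ G, ∀ d ∈ dirs, 0 ≤ 2 * cos (ω * ((p + d).2 - c)) := by
    intro p hp d hd
    obtain ⟨hq₁, hq₂⟩ := snd_add_mem_Icc hm.le hp.1 hp.2 hd
    have hq₂' : ((p + d).2 : ℝ) ≤ 2 * n := by exact_mod_cast hq₂
    linarith [half_le_cos_wedgeFreq_mul hn (s := (p + d).2 - c) (by linarith) (by linarith)]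
  have hρ₀ : 0 ≤ (1 + cos ω) / 2 := by linarith [neg_one_le_cos ω]
  have hρ₁ : (1 + cos ω) / 2 < 1 := by linarith [cos_wedgeFreq_lt_one hn]
  refine hstart.trans (le_hitLeProb (A := lineH (2 * n)) (B := (wedge m c)ᶜ)
    (g := fun p => 2 * cos (ω * (p.2 - c))) hρ₀ hρ₁
    (fun p hp (hA : p.2 = 2 * n) => hp.2.ne hA)
    (fun p hp hB => hB hp.1) (fun p hp d hd => wedgeTest_step hn hm hc₀ hcn hp.1 hp.2 hd)
    (fun p _ => (sum_dirs_wedgeTest hn p).ge) hg hg_nonneg (fun p hp => ?_) hz)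
  exact wedgeTest_le_two_mul_cos hn hm.le hc₀ hcn (le_snd_of_mem_wedge hm.le hp.1)
    (by exact_mod_cast hp.2.le)

theorem half_sub_le_hitLeProb_wedge (hn : 1 ≤ n) {t : ℝ} (ht : 3 ≤ t) (hc₀ : 0 ≤ c)
    (hc : c ≤ 2 * n * 2 ^ (-t)) :
    1 / 2 - 2 ^ (1 - t) ≤ hitLeProb (0, n) (lineH (2 * n)) (wedge (2 ^ (-(2 * t))) c)ᶜ := by
  have hn' : (1 : ℝ) ≤ n := by exact_mod_cast hn
  set P : ℝ := 2 ^ (-t)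
  have hP₀ : 0 < P := by positivity
  have hP : P ≤ 1 / 8 := by
    calc P ≤ 2 ^ (-3 : ℝ) := rpow_le_rpow_of_exponent_le one_le_two (by linarith)
      _ = 1 / 8 := by norm_num [rpow_neg]
  have h2P : (2 : ℝ) ^ (1 - t) = 2 * P := by rw [sub_eq_add_neg, rpow_add two_pos, rpow_one]
  have hm : (2 : ℝ) ^ (-(2 * t)) = P ^ 2 := by
    rw [← rpow_natCast, ← rpow_mul zero_le_two]; ring_nf
  have hcn : c ≤ n / 4 := by nlinarith
  have hhalf : 1 / 2 - P ≤ (n - c) / (2 * n - c) := by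
    rw [le_div_iff₀ (by linarith)]
    nlinarith
  have := sub_le_hitLeProb_wedge (m := P ^ 2) hn (by positivity) hc₀ (by linarith)
  rw [h2P, hm]
  nlinarith

end WedgeEscape

/-- **Escape probability through a wedge between consecutive dyadic levels.**
There exists `δ ∈ (0,1)` such that for all `α > 1`, with `β = 4/(α+3)`,
`γ = 2(α−1)/(α+3)`, `α₁ = β + γ`, and every positive integer `k` with
`2⌈2^{βk}⌉ ≤ 2^k` and `2^{(α₁−1)k−2} ≥ 2`, the simple random walk started at `(0, 2^k)`
satisfies
`P(τ̄_{L_{2^{k+1}}} ≤ τ̄_{ℤ²\W₀}) ≥ 1/2 − 2^{(β−1)k+1} − (1−δ)^{2^{(α₁−1)k−2}}`. -/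
theorem escape_wedge_prob_ge :
    ∃ δ : ℝ, 0 < δ ∧ δ < 1 ∧
      ∀ α β γ α₁ : ℝ, 1 < α → β = 4 / (α + 3) → γ = 2 * (α - 1) / (α + 3) → α₁ = β + γ →
        ∀ k : ℕ, 0 < k →
          2 * ⌈(2 : ℝ) ^ (β * k)⌉ ≤ (2 : ℤ) ^ k →
          (2 : ℝ) ≤ (2 : ℝ) ^ ((α₁ - 1) * k - 2) →
          1 / 2 - (2 : ℝ) ^ ((β - 1) * k + 1) - (1 - δ) ^ ((2 : ℝ) ^ ((α₁ - 1) * k - 2))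
            ≤ hitLeProb ((0 : ℤ), (2 : ℤ) ^ k) (lineH ((2 : ℤ) ^ (k + 1))) (wedgeW₀ β γ k)ᶜ := by
  refine ⟨1 / 2, by norm_num, by norm_num, fun α β γ α₁ hα hβ hγ hα₁ k _ _ hT => ?_⟩
  set t := (α₁ - 1) * k
  have hβk : β * k = k - t := by simp only [t, hα₁, hβ, hγ]; field_simp; ring
  have hγk : γ * k = 2 * t := by simp only [t, hα₁, hβ, hγ]; field_simp; ring
  have ht : 3 ≤ t := by
    linarith [(Real.rpow_le_rpow_left_iff one_lt_two).mp ((Real.rpow_one 2).trans_le hT)]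
  have hc : (⌈(2 : ℝ) ^ (β * k)⌉ : ℝ) ≤ 2 * 2 ^ k * 2 ^ (-t) := by
    have hβ₀ : 0 ≤ β := by rw [hβ]; exact div_nonneg (by norm_num) (by linarith)
    have : (1 : ℝ) ≤ 2 ^ (β * k) := Real.one_le_rpow one_le_two (mul_nonneg hβ₀ k.cast_nonneg)
    rw [mul_assoc, ← Real.rpow_natCast, ← Real.rpow_add two_pos, ← sub_eq_add_neg, ← hβk]
    exact Int.ceil_le_two_mul (by linarith)
  have hesc := half_sub_le_hitLeProb_wedge (n := 2 ^ k) (c := ⌈(2 : ℝ) ^ (β * k)⌉)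
    (one_le_pow₀ (by norm_num)) ht (by positivity) (by push_cast; exact hc)
  rw [pow_succ', wedgeW₀_eq_wedge, hγk, show (β - 1) * k + 1 = 1 - t by linarith]
  have : (0 : ℝ) ≤ (1 - 1 / 2) ^ ((2 : ℝ) ^ (t - 2)) := by positivity
  linarith

end SHM
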